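/- arXiv:2306.05930 — 6 statements merged into one kernel-verified Lean document; each statement's English description precedes it below -/
import Mathlib

section
/- Let B be a d×d real matrix (d ≥ 1) with all entries positive, and let x, v ∈ ℝ^d have all coordinates positive. Then d_H(Bx, v) ≤ L(B)·d_H(x, v) + d_H(Bv, v), where L(B) = (1 − √ψ(B))/(1 + √ψ(B)) and ψ(B) = min_{i,j,k,ℓ} (b_{ik} b_{jℓ})/(b_{iℓ} b_{jk}). -/
/-- Hilbert's pseudo-metric on the positive orthant of `ℝ^d`:
`d_H(x, y) = log( max_i (x_i / y_i) / min_i (x_i / y_i) )`. -/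
noncomputable def hilbertDist {d : ℕ} (x y : Fin d → ℝ) : ℝ :=
  Real.log ((⨆ i, x i / y i) / (⨅ i, x i / y i))

/-- `ψ(B) = min_{i,j,k,ℓ} (b_{ik} b_{jℓ}) / (b_{iℓ} b_{jk})`. -/
noncomputable def psi {d : ℕ} (B : Matrix (Fin d) (Fin d) ℝ) : ℝ :=
  ⨅ i, ⨅ j, ⨅ k, ⨅ l, (B i k * B j l) / (B i l * B j k)

/-- Birkhoff's contraction coefficient `L(B) = (1 − √ψ(B)) / (1 + √ψ(B))`. -/
noncomputable def birkhoffL {d : ℕ} (B : Matrix (Fin d) (Fin d) ℝ) : ℝ :=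
  (1 - Real.sqrt (psi B)) / (1 + Real.sqrt (psi B))

/-! Let `m` and `M` be the least and largest of the ratios `xᵢ / vᵢ`, so that `x - m v` and
`M v - x` are nonnegative. Applying `B` to them shows that the ratios `rᵢ = (Bx)ᵢ / (Bv)ᵢ` lie in
`[m, M]` and, since every 2×2 cross ratio of `B` is at least `ψ(B)`, satisfy
`ψ(B) (rᵢ - m)(M - rⱼ) ≤ (rⱼ - m)(M - rᵢ)`. With `s = √ψ(B)` and `b = √(M / m)` this bounds every
`rᵢ / rⱼ` by `((b + s) / (1 + s b))²`, and `log ((b + s) / (1 + s b)) ≤ L(B) log b` then gives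
Birkhoff's contraction `d_H(Bx, Bv) ≤ L(B) d_H(x, v)`. The triangle inequality for `d_H`
finishes. -/

open Set Matrix

theorem lt_ciInf_of_finite {ι α : Type*} [Finite ι] [Nonempty ι]
    [ConditionallyCompleteLinearOrder α] {f : ι → α} {a : α} (h : ∀ i, a < f i) : a < ⨅ i, f i := by
  obtain ⟨i, hi⟩ := exists_eq_ciInf_of_finite (f := f)
  exact hi ▸ h i

theorem mem_Icc_ciInf_ciSup_of_finite {ι α : Type*} [Finite ι] [Nonempty α]
    [ConditionallyCompleteLattice α] (f : ι → α) (i : ι) : f i ∈ Icc (⨅ j, f j) (⨆ j, f j) :=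
  ⟨ciInf_le (Finite.bddBelow_range f) i, le_ciSup (Finite.bddAbove_range f) i⟩

section PositiveMatrix

variable {ι : Type*} [Fintype ι] {B : Matrix ι ι ℝ} {x : ι → ℝ}

theorem Matrix.mulVec_apply_nonneg (hB : ∀ i j, 0 ≤ B i j) (hx : ∀ i, 0 ≤ x i) (i : ι) :
    0 ≤ (B *ᵥ x) i :=
  Finset.sum_nonneg fun j _ => mul_nonneg (hB i j) (hx j)

theorem Matrix.mulVec_apply_pos [Nonempty ι] (hB : ∀ i j, 0 < B i j) (hx : ∀ i, 0 < x i)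
    (i : ι) : 0 < (B *ᵥ x) i :=
  Finset.sum_pos (fun j _ => mul_pos (hB i j) (hx j)) Finset.univ_nonempty

theorem Matrix.mul_mulVec_mul_mulVec_le {c : ℝ}
    (hc : ∀ i j k l, c * (B i k * B j l) ≤ B j k * B i l) {δ ε : ι → ℝ}
    (hδ : ∀ k, 0 ≤ δ k) (hε : ∀ l, 0 ≤ ε l) (i j : ι) :
    c * ((B *ᵥ δ) i * (B *ᵥ ε) j) ≤ (B *ᵥ δ) j * (B *ᵥ ε) i := by
  simp only [mulVec, dotProduct]
  rw [Finset.sum_mul_sum, Finset.sum_mul_sum]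
  simp only [Finset.mul_sum]
  refine Finset.sum_le_sum fun k _ => Finset.sum_le_sum fun l _ => ?_
  calc c * (B i k * δ k * (B j l * ε l)) = c * (B i k * B j l) * (δ k * ε l) := by ring
    _ ≤ B j k * B i l * (δ k * ε l) :=
        mul_le_mul_of_nonneg_right (hc i j k l) (mul_nonneg (hδ k) (hε l))
    _ = B j k * δ k * (B i l * ε l) := by ring

theorem Matrix.mulVec_div_mulVec_mem_Icc [Nonempty ι] {v : ι → ℝ} {m M : ℝ}
    (hB : ∀ i j, 0 < B i j) (hv : ∀ i, 0 < v i)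
    (hmx : ∀ k, m * v k ≤ x k) (hxM : ∀ k, x k ≤ M * v k) (i : ι) :
    (B *ᵥ x) i / (B *ᵥ v) i ∈ Icc m M := by
  have hw := mulVec_apply_pos hB hv i
  have hlo := mulVec_apply_nonneg (fun i j => (hB i j).le) (x := x - m • v)
    (fun k => by simpa using hmx k) i
  have hhi := mulVec_apply_nonneg (fun i j => (hB i j).le) (x := M • v - x)
    (fun k => by simpa using hxM k) i
  simp only [mulVec_sub, mulVec_smul, Pi.sub_apply, Pi.smul_apply, smul_eq_mul, sub_nonneg]
    at hlo hhi
  exact ⟨(le_div_iff₀ hw).2 hlo, (div_le_iff₀ hw).2 hhi⟩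

theorem Matrix.mul_cross_ratio_le [Nonempty ι] {v : ι → ℝ} {m M c : ℝ}
    (hB : ∀ i j, 0 < B i j) (hv : ∀ i, 0 < v i)
    (hc : ∀ i j k l, c * (B i k * B j l) ≤ B j k * B i l)
    (hmx : ∀ k, m * v k ≤ x k) (hxM : ∀ k, x k ≤ M * v k) (i j : ι) :
    c * (((B *ᵥ x) i / (B *ᵥ v) i - m) * (M - (B *ᵥ x) j / (B *ᵥ v) j)) ≤
      ((B *ᵥ x) j / (B *ᵥ v) j - m) * (M - (B *ᵥ x) i / (B *ᵥ v) i) := by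
  have hw := mulVec_apply_pos hB hv
  have h := mul_mulVec_mul_mulVec_le hc (δ := x - m • v) (ε := M • v - x)
    (fun k => by simpa using hmx k) (fun k => by simpa using hxM k) i j
  simp only [mulVec_sub, mulVec_smul, Pi.sub_apply, Pi.smul_apply, smul_eq_mul] at h
  rw [← mul_le_mul_iff_of_pos_right (mul_pos (hw i) (hw j))]
  have hw₁ := (hw i).ne'
  have hw₂ := (hw j).ne'
  calc c * (((B *ᵥ x) i / (B *ᵥ v) i - m) * (M - (B *ᵥ x) j / (B *ᵥ v) j)) *
        ((B *ᵥ v) i * (B *ᵥ v) j)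
      = c * (((B *ᵥ x) i - m * (B *ᵥ v) i) * (M * (B *ᵥ v) j - (B *ᵥ x) j)) := by
        field_simp
    _ ≤ ((B *ᵥ x) j - m * (B *ᵥ v) j) * (M * (B *ᵥ v) i - (B *ᵥ x) i) := h
    _ = _ := by field_simp

end PositiveMatrix

theorem le_sq_div_mul_of_cross_le {s b m p q : ℝ} (hs₀ : 0 ≤ s) (hs₁ : s ≤ 1) (hb : 0 ≤ b)
    (hm : 0 < m) (hp : p ≤ b ^ 2 * m) (hq : q ∈ Icc m (b ^ 2 * m))
    (h : s ^ 2 * ((p - m) * (b ^ 2 * m - q)) ≤ (q - m) * (b ^ 2 * m - p)) :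
    p ≤ ((b + s) / (1 + s * b)) ^ 2 * q := by
  obtain ⟨hq₁, hq₂⟩ := hq
  rw [div_pow, div_mul_eq_mul_div, le_div_iff₀ (by positivity)]
  set D := s ^ 2 * (b ^ 2 * m - q) + (q - m) with hD
  have hsq : 0 ≤ s ^ 2 * (b ^ 2 * m - q) := mul_nonneg (sq_nonneg s) (by linarith)
  rcases (show 0 ≤ D by linarith).eq_or_lt with hD₀ | hD₀
  · have hqm : q = m := by linarith
    subst hqm
    have hsb : s * (b ^ 2 - 1) = 0 := by
      have : s ^ 2 * (b ^ 2 - 1) = 0 :=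
        (mul_eq_zero.1 (show s ^ 2 * (b ^ 2 - 1) * q = 0 by linarith)).resolve_right hm.ne'
      exact pow_eq_zero_iff two_ne_zero |>.1 (by linear_combination (b ^ 2 - 1) * this)
    have : (b + s) ^ 2 * q - b ^ 2 * q * (1 + s * b) ^ 2 =
        -q * (s * (b ^ 2 - 1)) * (2 * b + s + s * b ^ 2) := by ring
    rw [hsb] at this
    nlinarith [mul_le_mul_of_nonneg_right hp (sq_nonneg (1 + s * b))]
  · -- `D` times the claimed inequality is a square plus a multiple of the hypothesis
    have key : D * ((b + s) ^ 2 * q - p * (1 + s * b) ^ 2) =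
        (1 - s ^ 2) * ((b + s) * q - b * (1 + s * b) * m) ^ 2 +
          (1 + s * b) ^ 2 *
            ((q - m) * (b ^ 2 * m - p) - s ^ 2 * ((p - m) * (b ^ 2 * m - q))) := by
      rw [hD]; ring
    have hs : 0 ≤ 1 - s ^ 2 := by nlinarith
    have : 0 ≤ D * ((b + s) ^ 2 * q - p * (1 + s * b) ^ 2) := by
      rw [key]
      have := sub_nonneg.2 h
      positivity
    linarith [(mul_nonneg_iff_of_pos_left hD₀).1 this]

theorem log_add_div_one_add_mul_le {s b : ℝ} (hs₀ : 0 ≤ s) (hs₁ : s ≤ 1) (hb : 1 ≤ b) :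
    Real.log ((b + s) / (1 + s * b)) ≤ (1 - s) / (1 + s) * Real.log b := by
  let F : ℝ → ℝ := fun t => (1 - s) / (1 + s) * Real.log t - Real.log (t + s) + Real.log (1 + s * t)
  have hF' : ∀ t, 0 < t →
      HasDerivAt F (s * (1 - s) * (t - 1) ^ 2 / ((1 + s) * t * (t + s) * (1 + s * t))) t := by
    intro t ht
    have h : HasDerivAt F _ t :=
      (((Real.hasDerivAt_log ht.ne').const_mul ((1 - s) / (1 + s))).sub
        (((hasDerivAt_id t).add_const s).log (by simp; positivity))).add
        ((((hasDerivAt_id t).const_mul s).const_add 1).log (by simp; positivity))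
    refine h.congr_deriv ?_
    simp only [id]
    field_simp
    ring
  have hF : MonotoneOn F (Ici 1) := by
    refine monotoneOn_of_hasDerivWithinAt_nonneg (convex_Ici 1)
      (fun t ht => (hF' t (by linarith [mem_Ici.1 ht])).continuousAt.continuousWithinAt)
      (fun t ht => (hF' t ?_).hasDerivWithinAt) fun t ht => ?_
    all_goals rw [interior_Ici, mem_Ioi] at ht
    · linarith
    · have : 0 ≤ 1 - s := by linarith
      have : (0:ℝ) < t := by linarith
      positivity
  have := hF (mem_Ici.2 le_rfl) (mem_Ici.2 hb) hb
  simp only [F, Real.log_one, mul_zero, zero_sub, mul_one] at this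
  rw [Real.log_div (by positivity) (by positivity)]
  linarith

section FinDim

variable {d : ℕ}

theorem psi_le_div (B : Matrix (Fin d) (Fin d) ℝ) (i j k l : Fin d) :
    psi B ≤ B i k * B j l / (B i l * B j k) :=
  (ciInf_le (Finite.bddBelow_range _) i).trans <| (ciInf_le (Finite.bddBelow_range _) j).trans <|
    (ciInf_le (Finite.bddBelow_range _) k).trans <| ciInf_le (Finite.bddBelow_range _) l

theorem psi_mul_le {B : Matrix (Fin d) (Fin d) ℝ} (hB : ∀ i j, 0 < B i j) (i j k l : Fin d) :
    psi B * (B i k * B j l) ≤ B j k * B i l := by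
  have := psi_le_div B j i k l
  rwa [le_div_iff₀ (mul_pos (hB j l) (hB i k)), mul_comm (B j l)] at this

variable [Nonempty (Fin d)] {p q r : Fin d → ℝ}

theorem psi_le_one (B : Matrix (Fin d) (Fin d) ℝ) : psi B ≤ 1 :=
  have i := Classical.arbitrary (Fin d)
  (psi_le_div B i i i i).trans (div_self_le_one _)

theorem psi_pos {B : Matrix (Fin d) (Fin d) ℝ} (hB : ∀ i j, 0 < B i j) : 0 < psi B :=
  lt_ciInf_of_finite fun i => lt_ciInf_of_finite fun j =>
    lt_ciInf_of_finite fun k => lt_ciInf_of_finite fun l =>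
      div_pos (mul_pos (hB i k) (hB j l)) (mul_pos (hB i l) (hB j k))

theorem hilbertDist_le_log_of_le_mul (hp : ∀ i, 0 < p i) (hq : ∀ i, 0 < q i) {K : ℝ}
    (h : ∀ i j, p i / q i ≤ K * (p j / q j)) : hilbertDist p q ≤ Real.log K := by
  obtain ⟨i, hi⟩ := exists_eq_ciSup_of_finite (f := fun i => p i / q i)
  obtain ⟨j, hj⟩ := exists_eq_ciInf_of_finite (f := fun i => p i / q i)
  have hj₀ : 0 < p j / q j := div_pos (hp j) (hq j)
  rw [hilbertDist, ← hi, ← hj]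
  exact Real.log_le_log (div_pos (div_pos (hp i) (hq i)) hj₀) ((div_le_iff₀ hj₀).2 (h i j))

theorem hilbertDist_triangle (hp : ∀ i, 0 < p i) (hq : ∀ i, 0 < q i) (hr : ∀ i, 0 < r i) :
    hilbertDist p r ≤ hilbertDist p q + hilbertDist q r := by
  set m₁ := ⨅ i, p i / q i
  set M₁ := ⨆ i, p i / q i
  set m₂ := ⨅ i, q i / r i
  set M₂ := ⨆ i, q i / r i
  have hm₁ : 0 < m₁ := lt_ciInf_of_finite fun i => div_pos (hp i) (hq i)
  have hm₂ : 0 < m₂ := lt_ciInf_of_finite fun i => div_pos (hq i) (hr i)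
  have h₁ := mem_Icc_ciInf_ciSup_of_finite fun j => p j / q j
  have h₂ := mem_Icc_ciInf_ciSup_of_finite fun j => q j / r j
  have i₀ := Classical.arbitrary (Fin d)
  have hM₁ : 0 < M₁ := (div_pos (hp i₀) (hq i₀)).trans_le (h₁ i₀).2
  have hM₂ : 0 < M₂ := (div_pos (hq i₀) (hr i₀)).trans_le (h₂ i₀).2
  have hpqr : ∀ k, p k / r k = p k / q k * (q k / r k) :=
    fun k => (div_mul_div_cancel₀ (hq k).ne').symm
  unfold hilbertDist
  rw [← Real.log_mul (by positivity) (by positivity)]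
  refine hilbertDist_le_log_of_le_mul hp hr fun i j => ?_
  calc p i / r i = p i / q i * (q i / r i) := hpqr i
    _ ≤ M₁ * M₂ := mul_le_mul (h₁ i).2 (h₂ i).2 (div_pos (hq i) (hr i)).le hM₁.le
    _ = M₁ / m₁ * (M₂ / m₂) * (m₁ * m₂) := by field_simp
    _ ≤ M₁ / m₁ * (M₂ / m₂) * (p j / q j * (q j / r j)) :=
        mul_le_mul_of_nonneg_left (mul_le_mul (h₁ j).1 (h₂ j).1 hm₂.le (div_pos (hp j) (hq j)).le)
          (by positivity)
    _ = M₁ / m₁ * (M₂ / m₂) * (p j / r j) := by rw [hpqr j]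

theorem hilbertDist_mulVec_mulVec_le {B : Matrix (Fin d) (Fin d) ℝ} (hB : ∀ i j, 0 < B i j)
    {x v : Fin d → ℝ} (hx : ∀ i, 0 < x i) (hv : ∀ i, 0 < v i) :
    hilbertDist (B *ᵥ x) (B *ᵥ v) ≤ birkhoffL B * hilbertDist x v := by
  set m := ⨅ i, x i / v i with hm_def
  set M := ⨆ i, x i / v i with hM_def
  have hm : 0 < m := lt_ciInf_of_finite fun i => div_pos (hx i) (hv i)
  have hI := mem_Icc_ciInf_ciSup_of_finite fun j => x j / v j
  have hmx : ∀ k, m * v k ≤ x k := fun k => (le_div_iff₀ (hv k)).1 (hI k).1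
  have hxM : ∀ k, x k ≤ M * v k := fun k => (div_le_iff₀ (hv k)).1 (hI k).2
  have hmM : m ≤ M := (hI (Classical.arbitrary _)).1.trans (hI _).2
  set s := √(psi B)
  set b := √(M / m)
  have hs₀ : 0 ≤ s := Real.sqrt_nonneg _
  have hs₁ : s ≤ 1 := Real.sqrt_le_one.2 (psi_le_one B)
  have hb : 1 ≤ b := Real.one_le_sqrt.2 ((one_le_div hm).2 hmM)
  have hb₂ : b ^ 2 = M / m := Real.sq_sqrt (div_pos (hm.trans_le hmM) hm).le
  have hM : M = b ^ 2 * m := by rw [hb₂, div_mul_cancel₀ _ hm.ne']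
  have hpair : ∀ i j, (B *ᵥ x) i / (B *ᵥ v) i ≤
      ((b + s) / (1 + s * b)) ^ 2 * ((B *ᵥ x) j / (B *ᵥ v) j) := fun i j => by
    have hcross := mul_cross_ratio_le hB hv (psi_mul_le hB) hmx hxM i j
    rw [← Real.sq_sqrt (psi_pos hB).le, hM] at hcross
    exact le_sq_div_mul_of_cross_le hs₀ hs₁ (by linarith) hm
      (hM ▸ (mulVec_div_mulVec_mem_Icc hB hv hmx hxM i).2)
      (hM ▸ mulVec_div_mulVec_mem_Icc hB hv hmx hxM j) hcross
  calc hilbertDist (B *ᵥ x) (B *ᵥ v) ≤ Real.log (((b + s) / (1 + s * b)) ^ 2) :=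
        hilbertDist_le_log_of_le_mul (mulVec_apply_pos hB hx) (mulVec_apply_pos hB hv) hpair
    _ = 2 * Real.log ((b + s) / (1 + s * b)) := by rw [Real.log_pow]; norm_num
    _ ≤ 2 * ((1 - s) / (1 + s) * Real.log b) := by
        gcongr
        exact log_add_div_one_add_mul_le hs₀ hs₁ hb
    _ = birkhoffL B * hilbertDist x v := by
        rw [birkhoffL, hilbertDist, ← hm_def, ← hM_def, ← hb₂, Real.log_pow]
        push_cast
        ring

end FinDim

/-- For a positive matrix `B` and positive vectors `x`, `v`:
`d_H(Bx, v) ≤ L(B) d_H(x, v) + d_H(Bv, v)`. -/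
theorem hilbertDist_mulVec_le {d : ℕ} (hd : 1 ≤ d) (B : Matrix (Fin d) (Fin d) ℝ)
    (hB : ∀ i j, 0 < B i j) (x v : Fin d → ℝ)
    (hx : ∀ i, 0 < x i) (hv : ∀ i, 0 < v i) :
    hilbertDist (B.mulVec x) v ≤
      birkhoffL B * hilbertDist x v + hilbertDist (B.mulVec v) v := by
  have : Nonempty (Fin d) := ⟨⟨0, hd⟩⟩
  calc hilbertDist (B *ᵥ x) v ≤ hilbertDist (B *ᵥ x) (B *ᵥ v) + hilbertDist (B *ᵥ v) v :=
        hilbertDist_triangle (mulVec_apply_pos hB hx) (mulVec_apply_pos hB hv) hv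
    _ ≤ birkhoffL B * hilbertDist x v + hilbertDist (B *ᵥ v) v := by
        gcongr
        exact hilbertDist_mulVec_mulVec_le hB hx hv
end

section
/- Let (A(n))_{n∈ℕ} be a sequence of d×d real matrices, each with all entries positive, converging entrywise to a matrix A with all entries positive. Let v ∈ ℝ^d have all coordinates positive and let λ ∈ ℝ satisfy A v = λ v. Then for every real r > 1 there exists N ∈ ℕ such that for all n ≥ N and every x ∈ B_r(v), the vector A(n)·x belongs to B_r(v); i.e., for n sufficiently large, A(n) maps the cone B_r(v) into itself. -/
/-!
Pick `c > 0` with `B i j ≥ c v i`. For `m v ≤ x ≤ r m v`, applying this bound to `x - m v` and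
`r m v - x` and using `B v = λ v` squeezes `B x` between `(m λ + c (Σx - m Σv)) v` and
`(r m λ - c (r m Σv - Σx)) v`, whose ratio is at most `s = r - (r - 1) c Σv / λ < r`; so `B`
maps `B_r(v)` into `B_s(v)`. Once every entry of `A(n)` is within a factor `t` of the
corresponding entry of `B`, the coordinates of `A(n) x` are within a factor `t` of those of
`B x`, which costs a factor `t²` in the cone parameter; take `t² s = r`.
-/

open Filter

/-- The cone `B_r(v)`: positive vectors `x` such that `x_i v_j ≤ r x_j v_i`
for all `i, j`. -/
def coneBr {d : ℕ} (r : ℝ) (v : Fin d → ℝ) : Set (Fin d → ℝ) :=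
  {x | (∀ i, 0 < x i) ∧ ∀ i j, x i * v j ≤ r * (x j * v i)}

open Matrix

namespace Matrix

variable {m n : Type*} [Fintype n]

theorem mulVec_le_smul_mulVec {A B : Matrix m n ℝ} {t : ℝ} (hAB : ∀ i j, A i j ≤ t * B i j)
    {x : n → ℝ} (hx : 0 ≤ x) : A *ᵥ x ≤ t • (B *ᵥ x) := fun i => by
  simp only [Pi.smul_apply, smul_eq_mul, mulVec, dotProduct, Finset.mul_sum, ← mul_assoc]
  exact Finset.sum_le_sum fun j _ => mul_le_mul_of_nonneg_right (hAB i j) (hx j)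

theorem smul_le_mulVec_of_mul_le {B : Matrix m n ℝ} {v : m → ℝ} {c : ℝ}
    (hc : ∀ i j, c * v i ≤ B i j) {x : n → ℝ} (hx : 0 ≤ x) : (c * ∑ j, x j) • v ≤ B *ᵥ x :=
  fun i => by
    simp only [Pi.smul_apply, smul_eq_mul, mulVec, dotProduct, Finset.mul_sum, Finset.sum_mul]
    exact Finset.sum_le_sum fun j _ => by
      rw [mul_right_comm]
      exact mul_le_mul_of_nonneg_right (hc i j) (hx j)

theorem add_smul_le_mulVec_of_smul_le {B : Matrix n n ℝ} {v : n → ℝ} {c lam : ℝ}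
    (hc : ∀ i j, c * v i ≤ B i j) (heig : B *ᵥ v = lam • v) {a : ℝ} {x : n → ℝ}
    (hx : a • v ≤ x) : (a * lam + c * (∑ k, x k - a * ∑ k, v k)) • v ≤ B *ᵥ x := by
  have h := smul_le_mulVec_of_mul_le hc (sub_nonneg.2 hx)
  simp only [mulVec_sub, mulVec_smul, heig, smul_smul, Pi.sub_apply, Pi.smul_apply, smul_eq_mul,
    Finset.sum_sub_distrib, ← Finset.mul_sum] at h
  rw [add_smul]
  exact le_sub_iff_add_le'.1 h

theorem mulVec_le_sub_smul_of_le_smul {B : Matrix n n ℝ} {v : n → ℝ} {c lam : ℝ}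
    (hc : ∀ i j, c * v i ≤ B i j) (heig : B *ᵥ v = lam • v) {b : ℝ} {x : n → ℝ}
    (hx : x ≤ b • v) : B *ᵥ x ≤ (b * lam - c * (b * ∑ k, v k - ∑ k, x k)) • v := by
  have h := smul_le_mulVec_of_mul_le hc (sub_nonneg.2 hx)
  simp only [mulVec_sub, mulVec_smul, heig, smul_smul, Pi.sub_apply, Pi.smul_apply, smul_eq_mul,
    Finset.sum_sub_distrib, ← Finset.mul_sum] at h
  rw [sub_smul]
  exact le_sub_comm.1 h

end Matrix

theorem Finite.exists_pos_forall_le {ι : Type*} [Finite ι] {f : ι → ℝ} (hf : ∀ i, 0 < f i) :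
    ∃ c > 0, ∀ i, c ≤ f i := by
  cases isEmpty_or_nonempty ι
  · exact ⟨1, one_pos, isEmptyElim⟩
  · obtain ⟨i, hi⟩ := Finite.exists_min f
    exact ⟨f i, hf i, hi⟩

theorem eventually_le_mul_and_le_mul {α ι κ : Type*} [Finite ι] [Finite κ] {l : Filter α}
    {A : α → Matrix ι κ ℝ} {B : Matrix ι κ ℝ} (hB : ∀ i j, 0 < B i j)
    (hconv : ∀ i j, Tendsto (fun a => A a i j) l (nhds (B i j))) {t : ℝ} (ht : 1 < t) :
    ∀ᶠ a in l, ∀ i j, A a i j ≤ t * B i j ∧ B i j ≤ t * A a i j := by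
  simp only [eventually_all]
  intro i j
  have ht0 : 0 < t := by linarith
  have hlo : B i j / t < B i j := div_lt_self (hB i j) ht
  have hhi : B i j < t * B i j := lt_mul_left (hB i j) ht
  filter_upwards [(hconv i j).eventually (Icc_mem_nhds hlo hhi)] with a ha
  exact ⟨ha.2, (div_le_iff₀' ht0).1 ha.1⟩

section coneBr

variable {d : ℕ} {v : Fin d → ℝ}

theorem mem_coneBr_of_smul_le_of_le_smul (hv : ∀ i, 0 < v i) {a s : ℝ} (ha : 0 < a)
    {y : Fin d → ℝ} (hlo : a • v ≤ y) (hhi : y ≤ (s * a) • v) : y ∈ coneBr s v := by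
  have hlo' (i : Fin d) : a * v i ≤ y i := hlo i
  have hhi' (i : Fin d) : y i ≤ s * a * v i := hhi i
  refine ⟨fun i => (mul_pos ha (hv i)).trans_le (hlo' i), fun i j => ?_⟩
  have hs : 0 ≤ s := by nlinarith [hlo' i, hhi' i, mul_pos ha (hv i)]
  calc y i * v j ≤ s * a * v i * v j := mul_le_mul_of_nonneg_right (hhi' i) (hv j).le
    _ = s * (a * v j * v i) := by ring
    _ ≤ s * (y j * v i) := by gcongr; exacts [(hv i).le, hlo' j]

theorem exists_smul_le_of_mem_coneBr [NeZero d] (hv : ∀ i, 0 < v i) {r : ℝ} {x : Fin d → ℝ}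
    (hx : x ∈ coneBr r v) : ∃ m > 0, m • v ≤ x ∧ x ≤ (r * m) • v := by
  obtain ⟨k, hk⟩ := Finite.exists_min fun i => x i / v i
  refine ⟨x k / v k, div_pos (hx.1 k) (hv k), fun i => ?_, fun i => ?_⟩
  · simpa only [Pi.smul_apply, smul_eq_mul, ← le_div_iff₀ (hv i)] using hk i
  · have := hx.2 i k
    simp only [Pi.smul_apply, smul_eq_mul]
    rw [mul_div_assoc', div_mul_eq_mul_div, le_div_iff₀ (hv k)]
    linarith

theorem mem_coneBr_mul_mul_of_le_smul_of_le_smul (hv : ∀ i, 0 ≤ v i) {s t : ℝ} (hs : 0 ≤ s)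
    (ht : 0 < t) {x y : Fin d → ℝ} (hx : x ∈ coneBr s v) (hyx : y ≤ t • x) (hxy : x ≤ t • y) :
    y ∈ coneBr (t * t * s) v := by
  refine ⟨fun i => pos_of_mul_pos_right ((hx.1 i).trans_le (hxy i)) ht.le, fun i j => ?_⟩
  calc y i * v j ≤ t * x i * v j := mul_le_mul_of_nonneg_right (hyx i) (hv j)
    _ ≤ t * (s * (x j * v i)) := by
      rw [mul_assoc]; exact mul_le_mul_of_nonneg_left (hx.2 i j) ht.le
    _ ≤ t * (s * (t * y j * v i)) := by gcongr; exacts [hv i, hxy j]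
    _ = t * t * s * (y j * v i) := by ring

theorem exists_lt_mapsTo_coneBr [NeZero d] {B : Matrix (Fin d) (Fin d) ℝ}
    (hB : ∀ i j, 0 < B i j) (hv : ∀ i, 0 < v i) {lam : ℝ} (heig : B *ᵥ v = lam • v) {r : ℝ}
    (hr : 1 < r) : ∃ s, 0 < s ∧ s < r ∧ Set.MapsTo (B *ᵥ ·) (coneBr r v) (coneBr s v) := by
  obtain ⟨c, hc0, hc⟩ := Finite.exists_pos_forall_le fun p : Fin d × Fin d =>
    div_pos (hB p.1 p.2) (hv p.1)
  have hcB (i j : Fin d) : c * v i ≤ B i j := (le_div_iff₀ (hv i)).1 (hc (i, j))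
  set V := ∑ k, v k with hVdef
  have hV : 0 < V := Finset.sum_pos (fun k _ => hv k) Finset.univ_nonempty
  have hcV : c * V ≤ lam := by
    have := smul_le_mulVec_of_mul_le hcB (fun i => (hv i).le) 0
    rw [heig] at this
    exact le_of_mul_le_mul_right this (hv 0)
  have hlam : 0 < lam := (mul_pos hc0 hV).trans_le hcV
  set s := r - (r - 1) * c * V / lam with hsdef
  have hslam : s * lam = r * lam - (r - 1) * c * V := by
    rw [hsdef, sub_mul, div_mul_cancel₀ _ hlam.ne']
  refine ⟨s, ?_, sub_lt_self _ (div_pos (mul_pos (mul_pos (sub_pos.2 hr) hc0) hV) hlam),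
    fun x hx => ?_⟩
  · refine pos_of_mul_pos_left ?_ hlam.le
    nlinarith
  show B *ᵥ x ∈ _
  obtain ⟨m, hm, hmx, hxm⟩ := exists_smul_le_of_mem_coneBr hv hx
  set S := ∑ k, x k with hSdef
  have hS : m * V ≤ S := by
    rw [Finset.mul_sum]
    exact Finset.sum_le_sum fun k _ => hmx k
  refine mem_coneBr_of_smul_le_of_le_smul hv (a := m * lam + c * (S - m * V))
    (add_pos_of_pos_of_nonneg (mul_pos hm hlam) (mul_nonneg hc0.le (sub_nonneg.2 hS)))
    (add_smul_le_mulVec_of_smul_le hcB heig hmx)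
    ((mulVec_le_sub_smul_of_le_smul hcB heig hxm).trans
      (smul_le_smul_of_nonneg_right ?_ fun i => (hv i).le))
  refine le_of_mul_le_mul_right ?_ hlam
  rw [← hVdef, ← hSdef, mul_right_comm s, hslam]
  nlinarith [mul_nonneg (mul_nonneg (sub_nonneg.2 hr.le) hc0.le)
    (mul_nonneg (sub_nonneg.2 hS) (sub_nonneg.2 hcV))]

end coneBr

theorem eventually_mapsTo_coneBr_general {d : ℕ} (hd : 1 ≤ d)
    (A : ℕ → Matrix (Fin d) (Fin d) ℝ) (B : Matrix (Fin d) (Fin d) ℝ)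
    (hBpos : ∀ i j, 0 < B i j)
    (hconv : ∀ i j, Tendsto (fun n => A n i j) atTop (nhds (B i j)))
    (v : Fin d → ℝ) (hv : ∀ i, 0 < v i) (lam : ℝ) (heig : B.mulVec v = lam • v)
    (r : ℝ) (hr : 1 < r) :
    ∃ N : ℕ, ∀ n ≥ N, ∀ x ∈ coneBr r v, (A n).mulVec x ∈ coneBr r v := by
  have : NeZero d := ⟨by omega⟩
  obtain ⟨s, hs, hsr, hB⟩ := exists_lt_mapsTo_coneBr hBpos hv heig hr
  set t := √(r / s)
  have ht : 1 < t := Real.lt_sqrt_of_sq_lt (by rw [one_pow, one_lt_div hs]; exact hsr)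
  have htts : t * t * s = r := by
    rw [Real.mul_self_sqrt (by positivity), div_mul_cancel₀ r hs.ne']
  obtain ⟨N, hN⟩ := eventually_atTop.1 (eventually_le_mul_and_le_mul hBpos hconv ht)
  refine ⟨N, fun n hn x hx => htts ▸ ?_⟩
  have hx0 : 0 ≤ x := fun k => (hx.1 k).le
  exact mem_coneBr_mul_mul_of_le_smul_of_le_smul (fun i => (hv i).le) hs.le (by positivity)
    (hB hx)
    (mulVec_le_smul_mulVec (fun i j => (hN n hn i j).1) hx0)
    (mulVec_le_smul_mulVec (fun i j => (hN n hn i j).2) hx0)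

/-- If positive matrices `A(n)` converge entrywise to a positive matrix `A`
with positive eigenvector `v`, then for every `r > 1`, `A(n)` maps the cone
`B_r(v)` into itself for all `n` sufficiently large. -/
theorem eventually_mapsTo_coneBr {d : ℕ} (hd : 1 ≤ d)
    (A : ℕ → Matrix (Fin d) (Fin d) ℝ) (B : Matrix (Fin d) (Fin d) ℝ)
    (hApos : ∀ n, ∀ i j, 0 < A n i j) (hBpos : ∀ i j, 0 < B i j)
    (hconv : ∀ i j, Tendsto (fun n => A n i j) atTop (nhds (B i j)))
    (v : Fin d → ℝ) (hv : ∀ i, 0 < v i) (lam : ℝ) (heig : B.mulVec v = lam • v)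
    (r : ℝ) (hr : 1 < r) :
    ∃ N : ℕ, ∀ n ≥ N, ∀ x ∈ coneBr r v, (A n).mulVec x ∈ coneBr r v :=
  eventually_mapsTo_coneBr_general hd A B hBpos hconv v hv lam heig r hr
end

section
/- Let (A(n))_{n∈ℕ} be a sequence of invertible d×d real matrices, let e ∈ ℝ^d have all coordinates positive, and let w ∈ ℝ^d be nonzero, such that the normalized products (A(n) ⋯ A(1) A(0)) / ‖A(n) ⋯ A(1) A(0)‖ converge to the rank-one matrix e wᵀ as n → ∞ (Frobenius norm). Let U_0 ∈ ℝ^d satisfy wᵀ U_0 > 0 and define U_{n+1} = A(n) U_n for all n ∈ ℕ. Then U_n ≠ 0 for all n, the normalized vectors U_n / ‖U_n‖ (Euclidean norm) converge to e / ‖e‖ as n → ∞, and in particular there exists N such that for all n ≥ N all coordinates of U_n are positive. (If instead wᵀ U_0 < 0, then U_n / ‖U_n‖ converges to −e / ‖e‖.) -/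
/-! Writing `P n = A(n) ⋯ A(0)`, we have `U (n + 1) = P n U₀`, so the hypothesis gives
`U (n + 1) / ‖P n‖ → (wᵀ U₀) e ≠ 0`. The direction map `x ↦ x / ‖x‖` is invariant under
positive scaling and continuous away from `0`, so the direction of `U n` tends to that of
`(wᵀ U₀) e`, i.e. to `± e / ‖e‖`. The limit also forces `U n ≠ 0` for large `n`, hence for
all `n`, since a zero of the linear recurrence would persist forever. -/

open Matrix Filter

/-- The product `A(n) A(n−1) ⋯ A(1) A(0)` of the first terms of a sequence of
matrices. -/
def prodSeq {d : ℕ} (A : ℕ → Matrix (Fin d) (Fin d) ℝ) : ℕ → Matrix (Fin d) (Fin d) ℝ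
  | 0 => A 0
  | n + 1 => A (n + 1) * prodSeq A n

/-- The Frobenius norm of a real matrix. -/
noncomputable def frobNorm {d : ℕ} (M : Matrix (Fin d) (Fin d) ℝ) : ℝ :=
  Real.sqrt (∑ i, ∑ j, (M i j) ^ 2)

/-- The Euclidean norm of a vector of `ℝ^d`. -/
noncomputable def euclNorm {d : ℕ} (x : Fin d → ℝ) : ℝ :=
  Real.sqrt (∑ i, (x i) ^ 2)

lemma euclNorm_eq_norm_toLp {d : ℕ} (x : Fin d → ℝ) :
    euclNorm x = ‖(WithLp.toLp 2 x : EuclideanSpace ℝ (Fin d))‖ := by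
  simp [euclNorm, EuclideanSpace.norm_eq]

lemma continuous_euclNorm {d : ℕ} : Continuous (euclNorm : (Fin d → ℝ) → ℝ) := by
  unfold euclNorm
  fun_prop

lemma euclNorm_smul {d : ℕ} (c : ℝ) (x : Fin d → ℝ) : euclNorm (c • x) = |c| * euclNorm x := by
  simp only [euclNorm_eq_norm_toLp, WithLp.toLp_smul, norm_smul, Real.norm_eq_abs]

lemma euclNorm_pos {d : ℕ} {x : Fin d → ℝ} (hx : x ≠ 0) : 0 < euclNorm x := by
  rw [euclNorm_eq_norm_toLp, norm_pos_iff, ← WithLp.toLp_zero]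
  exact (WithLp.toLp_injective 2).ne hx

lemma euclNorm_neg {d : ℕ} (x : Fin d → ℝ) : euclNorm (-x) = euclNorm x := by
  simp only [euclNorm_eq_norm_toLp, WithLp.toLp_neg, norm_neg]

noncomputable def euclDirection {d : ℕ} (x : Fin d → ℝ) : Fin d → ℝ :=
  (euclNorm x)⁻¹ • x

lemma euclDirection_apply {d : ℕ} (x : Fin d → ℝ) (i : Fin d) :
    euclDirection x i = x i / euclNorm x := by
  simp [euclDirection, div_eq_inv_mul]

lemma euclDirection_smul_of_pos {d : ℕ} {c : ℝ} (hc : 0 < c) (x : Fin d → ℝ) :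
    euclDirection (c • x) = euclDirection x := by
  rw [euclDirection, euclDirection, euclNorm_smul, abs_of_pos hc, smul_smul, mul_inv,
    mul_right_comm, inv_mul_cancel₀ hc.ne', one_mul]

lemma euclDirection_smul_of_neg {d : ℕ} {c : ℝ} (hc : c < 0) (x : Fin d → ℝ) :
    euclDirection (c • x) = -euclDirection x := by
  rw [← neg_smul_neg, euclDirection_smul_of_pos (neg_pos.2 hc), euclDirection, euclDirection,
    euclNorm_neg, smul_neg]

lemma continuousAt_euclDirection {d : ℕ} {x : Fin d → ℝ} (hx : x ≠ 0) :
    ContinuousAt euclDirection x :=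
  (continuous_euclNorm.continuousAt.inv₀ (euclNorm_pos hx).ne').smul continuousAt_id

lemma tendsto_euclDirection_of_tendsto_inv_smul {ι : Type*} {l : Filter ι} {d : ℕ}
    {V : ι → Fin d → ℝ} {s : ι → ℝ} {L : Fin d → ℝ} (hs : ∀ n, 0 ≤ s n) (hL : L ≠ 0)
    (hV : Tendsto (fun n => (s n)⁻¹ • V n) l (nhds L)) :
    Tendsto (fun n => euclDirection (V n)) l (nhds (euclDirection L)) := by
  refine ((continuousAt_euclDirection hL).tendsto.comp hV).congr' ?_
  -- `s n = 0` would make `(s n)⁻¹ • V n = 0`, so the nonzero limit forces `s n > 0` eventually.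
  filter_upwards [hV.eventually_ne hL] with n hn
  have hsn : 0 < s n := (hs n).lt_of_ne' fun h => hn (by simp [h])
  exact euclDirection_smul_of_pos (inv_pos.2 hsn) _

lemma tendsto_inv_smul_mulVec {ι m n : Type*} [Fintype n] {l : Filter ι}
    {M : ι → Matrix m n ℝ} {s : ι → ℝ} {e : m → ℝ} {w : n → ℝ}
    (h : ∀ i j, Tendsto (fun k => M k i j / s k) l (nhds (e i * w j))) (x : n → ℝ) :
    Tendsto (fun k => (s k)⁻¹ • (M k *ᵥ x)) l (nhds ((w ⬝ᵥ x) • e)) := by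
  have hM : Tendsto (fun k => (s k)⁻¹ • M k) l (nhds (vecMulVec e w)) :=
    tendsto_pi_nhds.2 fun i => tendsto_pi_nhds.2 fun j => by
      simpa [div_eq_inv_mul, vecMulVec] using h i j
  have hmulVec := (continuous_id.matrix_mulVec (continuous_const (y := x))).tendsto _ |>.comp hM
  simpa [Function.comp_def, smul_mulVec, vecMulVec_mulVec] using hmulVec

lemma eq_prodSeq_mulVec {d : ℕ} {A : ℕ → Matrix (Fin d) (Fin d) ℝ} {U : ℕ → Fin d → ℝ}
    (hU : ∀ n, U (n + 1) = A n *ᵥ U n) (n : ℕ) : U (n + 1) = prodSeq A n *ᵥ U 0 := by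
  induction n with
  | zero => exact hU 0
  | succ n ih => rw [hU, ih, prodSeq, mulVec_mulVec]

lemma ne_zero_of_eventually_ne_zero {m R : Type*} [Fintype m] [NonUnitalNonAssocSemiring R]
    {A : ℕ → Matrix m m R} {U : ℕ → m → R} (hU : ∀ n, U (n + 1) = A n *ᵥ U n)
    (h : ∀ᶠ n in atTop, U n ≠ 0) (n : ℕ) : U n ≠ 0 := by
  intro h0
  have hzero : ∀ k, U (n + k) = 0 := by
    intro k
    induction k with
    | zero => exact h0
    | succ k ih => rw [← add_assoc, hU, ih, mulVec_zero]
  obtain ⟨N, hN⟩ := eventually_atTop.1 h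
  exact hN (n + N) (Nat.le_add_left N n) (hzero N)

lemma frobNorm_nonneg {d : ℕ} (M : Matrix (Fin d) (Fin d) ℝ) : 0 ≤ frobNorm M :=
  Real.sqrt_nonneg _

theorem tendsto_euclDirection_of_dotProduct_ne_zero {d : ℕ} {A : ℕ → Matrix (Fin d) (Fin d) ℝ}
    {e w : Fin d → ℝ} (he : e ≠ 0)
    (hconv : ∀ i j, Tendsto (fun n => prodSeq A n i j / frobNorm (prodSeq A n))
      atTop (nhds (e i * w j)))
    {U : ℕ → Fin d → ℝ} (hU : ∀ n, U (n + 1) = A n *ᵥ U n) (hc : w ⬝ᵥ U 0 ≠ 0) :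
    (∀ n, U n ≠ 0) ∧
      Tendsto (fun n => euclDirection (U n)) atTop (nhds (euclDirection ((w ⬝ᵥ U 0) • e))) := by
  have hL : (w ⬝ᵥ U 0) • e ≠ 0 := smul_ne_zero hc he
  have hlim : Tendsto (fun n => (frobNorm (prodSeq A n))⁻¹ • U (n + 1)) atTop
      (nhds ((w ⬝ᵥ U 0) • e)) := by
    simpa only [eq_prodSeq_mulVec hU] using tendsto_inv_smul_mulVec hconv (U 0)
  have hev : ∀ᶠ n in atTop, U n ≠ 0 := by
    rw [← map_add_atTop_eq_nat 1, eventually_map]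
    filter_upwards [hlim.eventually_ne hL] with n hn h0
    exact hn (by rw [h0, smul_zero])
  exact ⟨ne_zero_of_eventually_ne_zero hU hev, (tendsto_add_atTop_iff_nat 1).1
    (tendsto_euclDirection_of_tendsto_inv_smul (fun n => frobNorm_nonneg _) hL hlim)⟩

theorem generic_direction_tendsto_general {d : ℕ}
    (A : ℕ → Matrix (Fin d) (Fin d) ℝ)
    (e w : Fin d → ℝ) (he : ∀ i, 0 < e i)
    (hconv : ∀ i j, Tendsto (fun n => prodSeq A n i j / frobNorm (prodSeq A n))
      atTop (nhds (e i * w j)))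
    (U : ℕ → Fin d → ℝ) (hU : ∀ n, U (n + 1) = (A n).mulVec (U n)) :
    (0 < ∑ i, w i * U 0 i →
      (∀ n, U n ≠ 0) ∧
      (∀ i, Tendsto (fun n => U n i / euclNorm (U n)) atTop
        (nhds (e i / euclNorm e))) ∧
      ∃ N : ℕ, ∀ n ≥ N, ∀ i, 0 < U n i) ∧
    ((∑ i, w i * U 0 i) < 0 →
      (∀ n, U n ≠ 0) ∧
      (∀ i, Tendsto (fun n => U n i / euclNorm (U n)) atTop
        (nhds (-e i / euclNorm e)))) := by
  have he0 (hc : w ⬝ᵥ U 0 ≠ 0) : e ≠ 0 := by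
    obtain ⟨i, -, -⟩ := Finset.exists_ne_zero_of_sum_ne_zero hc
    exact fun h => (he i).ne' (congrFun h i)
  have key (hc : w ⬝ᵥ U 0 ≠ 0) :=
    tendsto_euclDirection_of_dotProduct_ne_zero (he0 hc) hconv hU hc
  refine ⟨fun (hc : 0 < w ⬝ᵥ U 0) => ?_, fun (hc : w ⬝ᵥ U 0 < 0) => ?_⟩
  · obtain ⟨hne, hlim⟩ := key hc.ne'
    rw [euclDirection_smul_of_pos hc] at hlim
    have hcoord (i : Fin d) : Tendsto (fun n => U n i / euclNorm (U n)) atTop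
        (nhds (e i / euclNorm e)) := by
      simpa only [euclDirection_apply] using tendsto_pi_nhds.1 hlim i
    refine ⟨hne, hcoord, eventually_atTop.1 (eventually_all.2 fun i => ?_)⟩
    have hei : 0 < e i / euclNorm e := div_pos (he i) (euclNorm_pos (he0 hc.ne'))
    filter_upwards [(hcoord i).eventually (lt_mem_nhds hei)] with n hn
    exact (div_pos_iff_of_pos_right (euclNorm_pos (hne n))).1 hn
  · obtain ⟨hne, hlim⟩ := key hc.ne
    rw [euclDirection_smul_of_neg hc] at hlim
    refine ⟨hne, fun i => ?_⟩
    simpa only [Pi.neg_apply, euclDirection_apply, neg_div] using tendsto_pi_nhds.1 hlim i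

/-- If normalized products of invertible matrices converge to `e wᵀ` with
`e > 0` and `w ≠ 0`, then for generic initial conditions (`wᵀ U_0 > 0`) the
solution of `U_{n+1} = A(n) U_n` is never zero, its direction tends to that of
`e`, and in particular `U_n > 0` for all `n` large enough; if instead
`wᵀ U_0 < 0`, the direction tends to that of `−e`. -/
theorem generic_direction_tendsto {d : ℕ} (hd : 1 ≤ d)
    (A : ℕ → Matrix (Fin d) (Fin d) ℝ) (hinv : ∀ n, IsUnit (A n))
    (e w : Fin d → ℝ) (he : ∀ i, 0 < e i) (hw : w ≠ 0)
    (hconv : ∀ i j, Tendsto (fun n => prodSeq A n i j / frobNorm (prodSeq A n))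
      atTop (nhds (e i * w j)))
    (U : ℕ → Fin d → ℝ) (hU : ∀ n, U (n + 1) = (A n).mulVec (U n)) :
    (0 < ∑ i, w i * U 0 i →
      (∀ n, U n ≠ 0) ∧
      (∀ i, Tendsto (fun n => U n i / euclNorm (U n)) atTop
        (nhds (e i / euclNorm e))) ∧
      ∃ N : ℕ, ∀ n ≥ N, ∀ i, 0 < U n i) ∧
    ((∑ i, w i * U 0 i) < 0 →
      (∀ n, U n ≠ 0) ∧
      (∀ i, Tendsto (fun n => U n i / euclNorm (U n)) atTop
        (nhds (-e i / euclNorm e)))) :=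
  generic_direction_tendsto_general A e w he hconv U hU
end

section
/- (Soundness of positivity certificates, general m) Let (A(n))_{n∈ℕ} be d×d real matrices and (U_n)_{n∈ℕ} vectors in ℝ^d with U_{n+1} = A(n) U_n for all n. Let T be an invertible d×d real matrix, v ∈ ℝ^d with all coordinates positive, r > 1 a real number, N ∈ ℕ and m ≥ 1 an integer. Define C = { x ∈ ℝ^d : T x ∈ B_r(v) }. Assume: (i) every x ∈ C has all coordinates positive; (ii) all coordinates of U_n are nonnegative for every n ≤ N; (iii) U_j ∈ C for every j with N ≤ j ≤ N + m − 1; (iv) for every n ≥ N and every x ∈ C, the vector A(n+m−1) A(n+m−2) ⋯ A(n) x belongs to C. Then all coordinates of U_n are nonnegative for every n ∈ ℕ, and all coordinates of U_n are positive for every n ≥ N. -/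
open Matrix

/-- `iterApply A n k x = A(n+k−1) A(n+k−2) ⋯ A(n) x`. -/
def iterApply {d : ℕ} (A : ℕ → Matrix (Fin d) (Fin d) ℝ) (n : ℕ) :
    ℕ → (Fin d → ℝ) → Fin d → ℝ
  | 0, x => x
  | k + 1, x => (A (n + k)).mulVec (iterApply A n k x)

/-! Every `U_n` with `n ≥ N` lies in `C`: the first `m` of them by hypothesis, and since
`U_{n+m} = A(n+m-1) ⋯ A(n) U_n`, membership propagates with step `m`. As `C` lies in the open
positive orthant, this gives `U_n > 0` for `n ≥ N`. -/

theorem iterApply_eq_of_recurrence {d : ℕ} {A : ℕ → Matrix (Fin d) (Fin d) ℝ}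
    {U : ℕ → Fin d → ℝ} (hU : ∀ n, U (n + 1) = A n *ᵥ U n) (n k : ℕ) :
    iterApply A n k (U n) = U (n + k) := by
  induction k with
  | zero => rfl
  | succ k ih => rw [iterApply, ih, ← add_assoc, hU]

theorem mem_of_le_of_mem_add {α : Type*} {u : ℕ → α} {S : Set α} {N m : ℕ} (hm : 1 ≤ m)
    (hinit : ∀ j, N ≤ j → j < N + m → u j ∈ S)
    (hstep : ∀ n ≥ N, u n ∈ S → u (n + m) ∈ S) :
    ∀ n ≥ N, u n ∈ S := by
  intro n
  induction n using Nat.strong_induction_on with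
  | _ n ih =>
    intro hn
    by_cases hwindow : n < N + m
    · exact hinit n hn hwindow
    · obtain ⟨k, rfl⟩ : ∃ k, n = k + m := ⟨n - m, by omega⟩
      exact hstep k (by omega) (ih k (by omega) (by omega))

theorem certificate_sound_general_general {d : ℕ} (A : ℕ → Matrix (Fin d) (Fin d) ℝ)
    (U : ℕ → Fin d → ℝ) (hU : ∀ n, U (n + 1) = (A n).mulVec (U n))
    (T : Matrix (Fin d) (Fin d) ℝ)
    (v : Fin d → ℝ) (r : ℝ)
    (N m : ℕ) (hm : 1 ≤ m)
    (hCpos : ∀ x : Fin d → ℝ, T.mulVec x ∈ coneBr r v → ∀ i, 0 < x i)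
    (hinit : ∀ n ≤ N, ∀ i, 0 ≤ U n i)
    (hUinit : ∀ j, N ≤ j → j ≤ N + m - 1 → T.mulVec (U j) ∈ coneBr r v)
    (hstep : ∀ n ≥ N, ∀ x : Fin d → ℝ, T.mulVec x ∈ coneBr r v →
      T.mulVec (iterApply A n m x) ∈ coneBr r v) :
    (∀ n, ∀ i, 0 ≤ U n i) ∧ ∀ n ≥ N, ∀ i, 0 < U n i := by
  have hC : ∀ n ≥ N, U n ∈ {x | T *ᵥ x ∈ coneBr r v} :=
    mem_of_le_of_mem_add hm (fun j hNj hj => hUinit j hNj (by omega))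
      fun n hn hUn => iterApply_eq_of_recurrence hU n m ▸ hstep n hn _ hUn
  have hpos : ∀ n ≥ N, ∀ i, 0 < U n i := fun n hn => hCpos _ (hC n hn)
  refine ⟨fun n i => ?_, hpos⟩
  rcases le_total n N with hle | hge
  · exact hinit n hle i
  · exact (hpos n hge i).le

/-- Soundness of positivity certificates (general `m ≥ 1`): if the cone
`C = T⁻¹(B_r(v))` is contained in the positive orthant, `U_n ≥ 0` for `n ≤ N`,
`U_j ∈ C` for `N ≤ j ≤ N + m − 1`, and `A(n+m−1) ⋯ A(n)` maps `C` into itself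
for every `n ≥ N`, then `U_n ≥ 0` for all `n` and `U_n > 0` for `n ≥ N`. -/
theorem certificate_sound_general {d : ℕ} (A : ℕ → Matrix (Fin d) (Fin d) ℝ)
    (U : ℕ → Fin d → ℝ) (hU : ∀ n, U (n + 1) = (A n).mulVec (U n))
    (T : Matrix (Fin d) (Fin d) ℝ) (hT : IsUnit T)
    (v : Fin d → ℝ) (hv : ∀ i, 0 < v i) (r : ℝ) (hr : 1 < r)
    (N m : ℕ) (hm : 1 ≤ m)
    (hCpos : ∀ x : Fin d → ℝ, T.mulVec x ∈ coneBr r v → ∀ i, 0 < x i)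
    (hinit : ∀ n ≤ N, ∀ i, 0 ≤ U n i)
    (hUinit : ∀ j, N ≤ j → j ≤ N + m - 1 → T.mulVec (U j) ∈ coneBr r v)
    (hstep : ∀ n ≥ N, ∀ x : Fin d → ℝ, T.mulVec x ∈ coneBr r v →
      T.mulVec (iterApply A n m x) ∈ coneBr r v) :
    (∀ n, ∀ i, 0 ≤ U n i) ∧ ∀ n ≥ N, ∀ i, 0 < U n i :=
  certificate_sound_general_general A U hU T v r N m hm hCpos hinit hUinit hstep
end

section
/- Let d ≥ 2, let v ∈ ℝ^d have all coordinates positive, and let r > 1 be a real number. Let G be the set of vectors g ∈ ℝ^d such that g_i ∈ {v_i, r·v_i} for every i, excluding the two vectors v and r·v (so G has 2^d − 2 elements). Then B_r(v) equals the set of all vectors of the form Σ_{g∈G} c_g · g where the coefficients c_g are nonnegative reals, not all zero; i.e., the cone B_r(v) is generated by these 2^d − 2 vectors. -/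
/-- The generator of `B_r(v)` indexed by `ε : Fin d → Bool`: its `i`-th
coordinate is `r v_i` if `ε i` and `v_i` otherwise. -/
def coneGen {d : ℕ} (r : ℝ) (v : Fin d → ℝ) (ε : Fin d → Bool) : Fin d → ℝ :=
  fun i => if ε i then r * v i else v i

open Set
open scoped Pointwise

section

variable {ι E : Type*} [Fintype ι] [AddCommGroup E] [Module ℝ E]

theorem convexHull_range_eq_image_stdSimplex (g : ι → E) :
    convexHull ℝ (range g) = Fintype.linearCombination ℝ g '' stdSimplex ℝ ι := by
  classical
  rw [← convexHull_rangle_single_eq_stdSimplex, LinearMap.image_convexHull, ← Set.range_comp]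
  congr 2
  funext i
  simp [Fintype.linearCombination_apply_single]

def nonnegCombs (g : ι → E) (s : Set ι) : Set E :=
  {x | ∃ c : ι → ℝ, (∀ i, 0 ≤ c i) ∧ (∀ i ∉ s, c i = 0) ∧ (∃ i, c i ≠ 0) ∧
    x = ∑ i, c i • g i}

theorem nonnegCombs_univ_eq_setOf_smul_convexHull (g : ι → E) :
    nonnegCombs g univ = {x | ∃ t : ℝ, 0 < t ∧ x ∈ t • convexHull ℝ (range g)} := by
  ext x
  simp only [nonnegCombs, mem_univ, not_true_eq_false, IsEmpty.forall_iff, implies_true,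
    true_and, convexHull_range_eq_image_stdSimplex, mem_ofPred_eq]
  constructor
  · rintro ⟨c, hc, ⟨i, hi⟩, rfl⟩
    have ht : 0 < ∑ i, c i :=
      Finset.sum_pos' (fun i _ ↦ hc i) ⟨i, Finset.mem_univ i, (hc i).lt_of_ne' hi⟩
    refine ⟨_, ht, _, ⟨(∑ i, c i)⁻¹ • c, ⟨fun i ↦ ?_, ?_⟩, rfl⟩, ?_⟩
    · exact mul_nonneg (inv_nonneg.2 ht.le) (hc i)
    · simp [← Finset.mul_sum, inv_mul_cancel₀ ht.ne']
    · dsimp only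
      rw [← map_smul, smul_inv_smul₀ ht.ne', Fintype.linearCombination_apply]
  · rintro ⟨t, ht, _, ⟨w, ⟨hw₀, hw₁⟩, rfl⟩, rfl⟩
    obtain ⟨i, -, hi⟩ := Finset.exists_ne_zero_of_sum_ne_zero (hw₁ ▸ one_ne_zero)
    refine ⟨t • w, fun i ↦ mul_nonneg ht.le (hw₀ i), ⟨i, mul_ne_zero ht.ne' hi⟩, ?_⟩
    dsimp only
    rw [← map_smul, Fintype.linearCombination_apply]

theorem nonnegCombs_mono {g : ι → E} {s t : Set ι} (hst : s ⊆ t) :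
    nonnegCombs g s ⊆ nonnegCombs g t := by
  rintro x ⟨c, hc, hcs, hne, rfl⟩
  exact ⟨c, hc, fun i hi ↦ hcs i fun his ↦ hi (hst his), hne, rfl⟩

theorem nonnegCombs_diff_singleton {g : ι → E} {s : Set ι} {a : ι}
    {μ : ι → ℝ} (hμ : ∀ i, 0 ≤ μ i) (hμs : ∀ i, μ i ≠ 0 → i ∈ s \ {a})
    (hμne : ∃ i, μ i ≠ 0) (hga : g a = ∑ i, μ i • g i) :
    nonnegCombs g (s \ {a}) = nonnegCombs g s := by
  classical
  refine (nonnegCombs_mono sdiff_subset).antisymm ?_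
  rintro x ⟨c, hc, hcs, hne, rfl⟩
  have hμa : μ a = 0 := by_contra fun h ↦ (hμs a h).2 rfl
  refine ⟨c + c a • (μ - Pi.single a 1), fun i ↦ ?_, fun i hi ↦ ?_, ?_, ?_⟩
  · rcases eq_or_ne i a with rfl | hia
    · simp [hμa]
    · simpa [hia] using add_nonneg (hc i) (mul_nonneg (hc a) (hμ i))
  · rcases eq_or_ne i a with rfl | hia
    · simp [hμa]
    · have hi : i ∉ s := fun his ↦ hi ⟨his, hia⟩
      have hμi : μ i = 0 := by_contra fun h ↦ hi (hμs i h).1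
      simp [hia, hμi, hcs i hi]
  · rcases eq_or_ne (c a) 0 with hca | hca
    · simpa [hca] using hne
    · obtain ⟨j, hj⟩ := hμne
      have hja : j ≠ a := (hμs j hj).2
      refine ⟨j, ne_of_gt ?_⟩
      simpa [hja] using add_pos_of_nonneg_of_pos (hc j)
        (mul_pos ((hc a).lt_of_ne' hca) ((hμ j).lt_of_ne' hj))
  · simp [add_smul, sub_smul, mul_smul, Finset.sum_add_distrib, Finset.sum_sub_distrib,
      ← Finset.smul_sum, ← hga]

theorem nonnegCombs_diff_singleton_of_eq_smul_add {g : ι → E} {s : Set ι}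
    {a p q : ι} {κ : ℝ} (hκ : 0 < κ) (hp : p ∈ s \ {a}) (hq : q ∈ s \ {a})
    (hga : g a = κ • (g p + g q)) : nonnegCombs g (s \ {a}) = nonnegCombs g s := by
  classical
  have hsingle (j : ι) : (0 : ι → ℝ) ≤ Pi.single j 1 := Pi.single_nonneg.2 zero_le_one
  refine nonnegCombs_diff_singleton (μ := κ • (Pi.single p 1 + Pi.single q 1))
    (smul_nonneg hκ.le (add_nonneg (hsingle p) (hsingle q))) (fun i hi ↦ ?_) ⟨p, ?_⟩ ?_
  · rcases eq_or_ne i p with rfl | hip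
    · exact hp
    rcases eq_or_ne i q with rfl | hiq
    · exact hq
    simp [hip, hiq] at hi
  · have := hsingle q p
    simp only [Pi.smul_apply, Pi.add_apply, Pi.single_eq_same, smul_eq_mul,
      Pi.zero_apply] at this ⊢
    positivity
  · simp [hga, Pi.single_apply, add_smul, mul_smul, Finset.sum_add_distrib, smul_add]

end

section

variable {d : ℕ} {r : ℝ} {v : Fin d → ℝ}

theorem coneGen_bot : coneGen r v ⊥ = v := rfl

theorem coneGen_top : coneGen r v ⊤ = r • v := rfl

theorem coneGen_add_coneGen_compl (ε : Fin d → Bool) :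
    coneGen r v ε + coneGen r v εᶜ = (1 + r) • v := by
  funext i
  cases h : ε i <;> simp [coneGen, h] <;> ring

theorem range_coneGen : range (coneGen r v) = univ.pi fun i ↦ {v i, r * v i} := by
  ext x
  simp only [mem_range, mem_univ_pi, mem_insert_iff, mem_singleton_iff]
  constructor
  · rintro ⟨ε, rfl⟩ i
    unfold coneGen
    split_ifs <;> simp
  · intro hx
    refine ⟨fun i ↦ decide (x i ≠ v i), funext fun i ↦ ?_⟩
    rcases eq_or_ne (x i) (v i) with h | h
    · simp [coneGen, h]
    · simpa [coneGen, h] using ((hx i).resolve_left h).symm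

theorem convexHull_range_coneGen (hv : ∀ i, 0 ≤ v i) (hr : 1 ≤ r) :
    convexHull ℝ (range (coneGen r v)) = Icc v (r • v) := by
  rw [range_coneGen, convexHull_pi, ← pi_univ_Icc]
  refine pi_congr rfl fun i _ ↦ ?_
  rw [convexHull_pair, segment_eq_Icc (le_mul_of_one_le_left (hv i) hr)]
  rfl

theorem coneBr_eq_setOf_smul_Icc [Nonempty (Fin d)] (hv : ∀ i, 0 < v i) :
    coneBr r v = {x | ∃ t : ℝ, 0 < t ∧ x ∈ t • Icc v (r • v)} := by
  ext x
  constructor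
  · rintro ⟨hx, hxr⟩
    obtain ⟨j, -, hj⟩ := Finset.exists_min_image Finset.univ (fun i ↦ x i / v i)
      Finset.univ_nonempty
    have ht : 0 < x j / v j := div_pos (hx j) (hv j)
    refine ⟨x j / v j, ht,
      (mem_smul_set_iff_inv_smul_mem₀ ht.ne' _ _).2 ⟨fun i ↦ ?_, fun i ↦ ?_⟩⟩
    · have hji := hj i (Finset.mem_univ i)
      rw [div_le_div_iff₀ (hv j) (hv i)] at hji
      simp only [Pi.smul_apply, smul_eq_mul, inv_div]
      rw [div_mul_eq_mul_div, le_div_iff₀ (hx j)]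
      linarith
    · simp only [Pi.smul_apply, smul_eq_mul, inv_div]
      rw [div_mul_eq_mul_div, div_le_iff₀ (hx j)]
      nlinarith [hxr i j]
  · rintro ⟨t, ht, p, ⟨hvp, hpr⟩, rfl⟩
    refine ⟨fun i ↦ mul_pos ht ((hv i).trans_le (hvp i)), fun i j ↦ ?_⟩
    have hpri : p i ≤ r * v i := hpr i
    have hr : 0 < r := pos_of_mul_pos_left ((hv i).trans_le ((hvp i).trans hpri)) (hv i).le
    have hvi := hv i
    have hvj := hv j
    calc (t • p) i * v j = t * p i * v j := rfl
      _ ≤ t * (r * v i) * v j := by gcongr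
      _ = r * (t * v j * v i) := by ring
      _ ≤ r * (t * p j * v i) := by gcongr; exact hvp j
      _ = r * ((t • p) j * v i) := rfl

theorem nonnegCombs_coneGen_compl_bot_top (hd : 2 ≤ d) (hr : 0 < r) :
    nonnegCombs (coneGen r v) {⊥, ⊤}ᶜ = nonnegCombs (coneGen r v) univ := by
  set ε : Fin d → Bool := fun i ↦ decide (i = ⟨0, by omega⟩)
  have hε_bot : ε ≠ ⊥ := fun h ↦ by simpa [ε] using congrFun h ⟨0, by omega⟩
  have hε_top : ε ≠ ⊤ := fun h ↦ by simpa [ε, Fin.ext_iff] using congrFun h ⟨1, by omega⟩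
  have hεc_bot : εᶜ ≠ ⊥ := mt compl_eq_bot.1 hε_top
  have hεc_top : εᶜ ≠ ⊤ := mt compl_eq_top.1 hε_bot
  have hsum : coneGen r v ε + coneGen r v εᶜ = (1 + r) • v := coneGen_add_coneGen_compl ε
  calc nonnegCombs (coneGen r v) {⊥, ⊤}ᶜ
        = nonnegCombs (coneGen r v) ((univ \ {⊤}) \ {⊥}) := by
        congr 1
        ext
        simp only [mem_sdiff, mem_univ, mem_singleton_iff, mem_compl_iff, mem_insert_iff]
        tauto
    _ = nonnegCombs (coneGen r v) (univ \ {⊤}) := by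
        refine nonnegCombs_diff_singleton_of_eq_smul_add (p := ε) (q := εᶜ)
          (κ := (1 + r)⁻¹) (by positivity) (by simp [hε_top, hε_bot])
          (by simp [hεc_top, hεc_bot]) ?_
        rw [coneGen_bot, hsum, inv_smul_smul₀ (by positivity)]
    _ = nonnegCombs (coneGen r v) univ := by
        refine nonnegCombs_diff_singleton_of_eq_smul_add (p := ε) (q := εᶜ)
          (κ := r / (1 + r)) (by positivity) (by simp [hε_top]) (by simp [hεc_top]) ?_
        rw [coneGen_top, hsum, smul_smul, div_mul_cancel₀ _ (by positivity)]

end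

/-- The cone `B_r(v)` is generated by the `2^d − 2` vectors whose `i`-th
coordinate is `v_i` or `r v_i`, excluding `v` (all coordinates `v_i`) and
`r • v` (all coordinates `r v_i`): it equals the set of nonnegative
combinations, with not all coefficients zero, of these generators. -/
theorem coneBr_eq_generated {d : ℕ} (hd : 2 ≤ d) (v : Fin d → ℝ)
    (hv : ∀ i, 0 < v i) (r : ℝ) (hr : 1 < r) :
    coneBr r v = {x | ∃ c : (Fin d → Bool) → ℝ,
      (∀ ε, 0 ≤ c ε) ∧
      c (fun _ => false) = 0 ∧ c (fun _ => true) = 0 ∧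
      (∃ ε, c ε ≠ 0) ∧
      x = ∑ ε : Fin d → Bool, c ε • coneGen r v ε} := by
  have : Nonempty (Fin d) := Fin.pos_iff_nonempty.1 (by omega)
  calc coneBr r v = nonnegCombs (coneGen r v) univ := by
        rw [coneBr_eq_setOf_smul_Icc hv, nonnegCombs_univ_eq_setOf_smul_convexHull,
          convexHull_range_coneGen (fun i ↦ (hv i).le) hr.le]
    _ = nonnegCombs (coneGen r v) {⊥, ⊤}ᶜ :=
        (nonnegCombs_coneGen_compl_bot_top hd (by linarith)).symm
    _ = _ := by
        ext x
        simp only [nonnegCombs, mem_compl_iff, mem_insert_iff, mem_singleton_iff, not_not,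
          forall_eq_or_imp, forall_eq, and_assoc]
        rfl
end

section
/- Let M be a d×d real matrix with all entries positive, let μ ∈ ℝ, and let v ∈ ℝ^d be a nonzero vector with M v = μ v. If |μ| equals the spectral radius of M (i.e., |μ| ≥ |ν| for every complex eigenvalue ν of M), then μ > 0 and either v or −v has all coordinates positive. -/
/-!
Let `w = |v|`. The triangle inequality gives `|μ| w ≤ M w`. If this inequality were not an
equality, `u = M w` would be a positive vector with `M u > |μ| u` in every coordinate, hence
`M u ≥ r u` for some `r > |μ|`; iterating gives `‖Mᵐ‖ ≥ rᵐ`, and Gelfand's formula puts the spectral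
radius at least `r`, contradicting the hypothesis. So `M |v| = |μ| |v|`, i.e. the triangle inequality
is an equality in every row, which for a positive row forces `v` to have constant sign. A nonzero
eigenvector of constant sign of a positive matrix is strictly of that sign, with positive eigenvalue.
-/

open Filter Topology

theorem Finset.abs_sum_lt_sum_abs {ι R : Type*} [AddCommGroup R] [LinearOrder R]
    [IsOrderedAddMonoid R] {s : Finset ι} {f : ι → R}
    (hpos : ∃ j ∈ s, 0 < f j) (hneg : ∃ j ∈ s, f j < 0) : |∑ j ∈ s, f j| < ∑ j ∈ s, |f j| := by
  obtain ⟨j, hj, hfj⟩ := hpos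
  obtain ⟨l, hl, hfl⟩ := hneg
  refine abs_lt.2 ⟨?_, ?_⟩
  · rw [neg_lt, ← Finset.sum_neg_distrib]
    exact Finset.sum_lt_sum (fun i _ => neg_le_abs (f i))
      ⟨j, hj, by rw [abs_of_pos hfj]; exact neg_lt_self hfj⟩
  · exact Finset.sum_lt_sum (fun i _ => le_abs_self _)
      ⟨l, hl, by rw [abs_of_neg hfl]; exact hfl.trans (neg_pos.2 hfl)⟩

theorem exists_gt_mul_le_of_forall_mul_lt {ι : Type*} [Finite ι] {ρ : ℝ} {u y : ι → ℝ}
    (h : ∀ i, ρ * u i < y i) : ∃ r, ρ < r ∧ ∀ i, r * u i ≤ y i := by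
  have hnhds : ∀ᶠ r in 𝓝 ρ, ∀ i, r * u i < y i := eventually_all.2 fun i =>
    ((continuous_mul_const (u i)).tendsto ρ).eventually_lt_const (h i)
  obtain ⟨r, hr, hρr⟩ := ((hnhds.filter_mono nhdsWithin_le_nhds).and
    (self_mem_nhdsWithin (s := Set.Ioi ρ))).exists
  exact ⟨r, hρr, fun i => (hr i).le⟩

theorem ofReal_le_spectralRadius_of_pow_le_norm_pow {A : Type*} [NormedRing A]
    [NormedAlgebra ℂ A] [CompleteSpace A] {a : A} {r : ℝ} (hr : 0 ≤ r)
    (h : ∀ m : ℕ, r ^ m ≤ ‖a ^ m‖) : ENNReal.ofReal r ≤ spectralRadius ℂ a := by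
  refine ge_of_tendsto (spectrum.pow_norm_pow_one_div_tendsto_nhds_spectralRadius a) ?_
  filter_upwards [eventually_ge_atTop 1] with m hm
  refine ENNReal.ofReal_le_ofReal ?_
  rw [one_div, Real.le_rpow_inv_iff_of_pos hr (norm_nonneg _) (by positivity), Real.rpow_natCast]
  exact h m

namespace Matrix

variable {n : Type*} [Fintype n]

section OrderedRing

variable {R : Type*} [CommRing R] [LinearOrder R] [IsStrictOrderedRing R]
  {M : Matrix n n R} {x y : n → R}

theorem mulVec_mono_of_nonneg (hM : ∀ i j, 0 ≤ M i j) (h : x ≤ y) : M *ᵥ x ≤ M *ᵥ y :=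
  fun i => Finset.sum_le_sum fun j _ => mul_le_mul_of_nonneg_left (h j) (hM i j)

theorem abs_mulVec_le (hM : ∀ i j, 0 ≤ M i j) (x : n → R) : |M *ᵥ x| ≤ M *ᵥ |x| := fun i =>
  (Finset.abs_sum_le_sum_abs _ _).trans_eq <| Finset.sum_congr rfl fun j _ => by
    rw [abs_mul, abs_of_nonneg (hM i j), Pi.abs_apply]

theorem mulVec_apply_pos_s15 (hM : ∀ i j, 0 < M i j) (hx : 0 ≤ x) (hx0 : x ≠ 0) (i : n) :
    0 < (M *ᵥ x) i := by
  obtain ⟨k, hk⟩ := Function.ne_iff.1 hx0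
  exact Finset.sum_pos' (fun j _ => mul_nonneg (hM i j).le (hx j))
    ⟨k, Finset.mem_univ k, mul_pos (hM i k) ((hx k).lt_of_ne' hk)⟩

theorem pos_of_mulVec_eq_smul (hM : ∀ i j, 0 < M i j) (hx : 0 ≤ x) (hx0 : x ≠ 0) {μ : R}
    (h : M *ᵥ x = μ • x) : 0 < μ ∧ ∀ i, 0 < x i := by
  have hμx : ∀ i, 0 < μ * x i := fun i => by
    simpa [h] using mulVec_apply_pos_s15 hM hx hx0 i
  obtain ⟨k, hk⟩ := Function.ne_iff.1 hx0
  have hμ : 0 < μ := pos_of_mul_pos_left (hμx k) (hx k)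
  exact ⟨hμ, fun i => pos_of_mul_pos_right (hμx i) hμ.le⟩

theorem nonneg_or_nonpos_of_abs_mulVec_eq (hM : ∀ i j, 0 < M i j) {i : n}
    (h : |(M *ᵥ x) i| = (M *ᵥ |x|) i) : 0 ≤ x ∨ x ≤ 0 := by
  by_contra! hx
  obtain ⟨⟨l, hl⟩, ⟨j, hj⟩⟩ : (∃ l, x l < 0) ∧ ∃ j, 0 < x j := by
    simpa [Pi.le_def] using hx
  refine h.not_lt ((Finset.abs_sum_lt_sum_abs ⟨j, Finset.mem_univ j, mul_pos (hM i j) hj⟩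
    ⟨l, Finset.mem_univ l, mul_neg_of_pos_of_neg (hM i l) hl⟩).trans_eq ?_)
  exact Finset.sum_congr rfl fun k _ => by rw [abs_mul, abs_of_pos (hM i k), Pi.abs_apply]

theorem pow_smul_le_pow_mulVec [DecidableEq n] (hM : ∀ i j, 0 ≤ M i j) {r : R} (hr : 0 ≤ r)
    (h : r • x ≤ M *ᵥ x) (m : ℕ) : r ^ m • x ≤ (M ^ m) *ᵥ x := by
  induction m with
  | zero => simp
  | succ m ih =>
    calc r ^ (m + 1) • x = r ^ m • (r • x) := by rw [pow_succ, mul_smul]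
      _ ≤ r ^ m • (M *ᵥ x) := smul_le_smul_of_nonneg_left h (pow_nonneg hr m)
      _ = M *ᵥ (r ^ m • x) := (mulVec_smul M _ x).symm
      _ ≤ M *ᵥ ((M ^ m) *ᵥ x) := mulVec_mono_of_nonneg hM ih
      _ = (M ^ (m + 1)) *ᵥ x := by rw [mulVec_mulVec, pow_succ']

end OrderedRing

variable [DecidableEq n]

theorem spectralRadius_le_of_forall_isRoot_charpoly {A : Matrix n n ℂ} {a : ℝ}
    (h : ∀ z, A.charpoly.IsRoot z → ‖z‖ ≤ a) : spectralRadius ℂ A ≤ ENNReal.ofReal a :=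
  iSup₂_le fun z hz => by
    rw [← enorm_eq_nnnorm, ← ofReal_norm]
    exact ENNReal.ofReal_le_ofReal (h z (mem_spectrum_iff_isRoot_charpoly.1 hz))

section LinftyOpNorm

attribute [local instance] Matrix.linftyOpNormedRing Matrix.linftyOpNormedAlgebra

theorem linfty_opNorm_map_ofReal (M : Matrix n n ℝ) : ‖M.map (algebraMap ℝ ℂ)‖ = ‖M‖ := by
  simp [linfty_opNorm_def]

-- The Collatz–Wielandt lower bound, via Gelfand's formula.
theorem ofReal_le_spectralRadius_of_smul_le_mulVec {M : Matrix n n ℝ} (hM : ∀ i j, 0 ≤ M i j)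
    {u : n → ℝ} (hu : 0 ≤ u) (hu0 : u ≠ 0) {r : ℝ} (hr : 0 ≤ r) (h : r • u ≤ M *ᵥ u) :
    ENNReal.ofReal r ≤ spectralRadius ℂ (M.map (algebraMap ℝ ℂ)) := by
  refine ofReal_le_spectralRadius_of_pow_le_norm_pow hr fun m => ?_
  have hnorm : ‖r ^ m • u‖ ≤ ‖(M ^ m) *ᵥ u‖ :=
    (pi_norm_le_iff_of_nonneg (norm_nonneg _)).2 fun i => by
      rw [Real.norm_of_nonneg (smul_nonneg (pow_nonneg hr m) hu i)]
      exact (pow_smul_le_pow_mulVec hM hr h m i).trans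
        ((Real.le_norm_self _).trans (norm_le_pi_norm _ i))
  rw [← Matrix.map_pow, linfty_opNorm_map_ofReal]
  refine le_of_mul_le_mul_right ?_ (norm_pos_iff.2 hu0)
  calc r ^ m * ‖u‖ = ‖r ^ m • u‖ := by rw [norm_smul, Real.norm_of_nonneg (pow_nonneg hr m)]
    _ ≤ ‖(M ^ m) *ᵥ u‖ := hnorm
    _ ≤ ‖M ^ m‖ * ‖u‖ := linfty_opNorm_mulVec _ _

end LinftyOpNorm

theorem mulVec_eq_smul_of_smul_le_mulVec {M : Matrix n n ℝ} (hM : ∀ i j, 0 < M i j)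
    {w : n → ℝ} (hw : 0 ≤ w) (hw0 : w ≠ 0) {ρ : ℝ} (hρ : 0 ≤ ρ) (hle : ρ • w ≤ M *ᵥ w)
    (hspec : spectralRadius ℂ (M.map (algebraMap ℝ ℂ)) ≤ ENNReal.ofReal ρ) :
    M *ᵥ w = ρ • w := by
  by_contra hne
  have hu : ∀ i, 0 < (M *ᵥ w) i := mulVec_apply_pos_s15 hM hw hw0
  -- `M` maps the nonzero nonnegative gap `M w - ρ w` to a positive vector.
  have hgap : ∀ i, ρ * (M *ᵥ w) i < (M *ᵥ (M *ᵥ w)) i := fun i => by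
    simpa [mulVec_sub, mulVec_smul] using
      mulVec_apply_pos_s15 hM (sub_nonneg.2 hle) (sub_ne_zero.2 hne) i
  obtain ⟨r, hρr, hr⟩ := exists_gt_mul_le_of_forall_mul_lt hgap
  obtain ⟨k, -⟩ := Function.ne_iff.1 hw0
  have hu0 : M *ᵥ w ≠ 0 := Function.ne_iff.2 ⟨k, (hu k).ne'⟩
  have hrρ := (ofReal_le_spectralRadius_of_smul_le_mulVec (fun i j => (hM i j).le)
    (fun i => (hu i).le) hu0 (hρ.trans hρr.le) hr).trans hspec
  exact hρr.not_ge ((ENNReal.ofReal_le_ofReal_iff hρ).1 hrρ)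

end Matrix

open Matrix

theorem perron_eigenvector_pos_general {d : ℕ}
    (M : Matrix (Fin d) (Fin d) ℝ) (hM : ∀ i j, 0 < M i j)
    (μ : ℝ) (v : Fin d → ℝ) (hv : v ≠ 0) (heig : M.mulVec v = μ • v)
    (hspec : ∀ ν : ℂ, (M.charpoly.map (algebraMap ℝ ℂ)).IsRoot ν →
      ‖ν‖ ≤ |μ|) :
    0 < μ ∧ ((∀ i, 0 < v i) ∨ (∀ i, v i < 0)) := by
  have hradius : spectralRadius ℂ (M.map (algebraMap ℝ ℂ)) ≤ ENNReal.ofReal |μ| :=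
    spectralRadius_le_of_forall_isRoot_charpoly fun z hz => hspec z (by rwa [charpoly_map] at hz)
  have htriangle : |μ| • |v| ≤ M *ᵥ |v| := fun i => by
    simpa [heig, abs_mul] using abs_mulVec_le (fun i j => (hM i j).le) v i
  have habs : M *ᵥ |v| = |μ| • |v| := mulVec_eq_smul_of_smul_le_mulVec hM (abs_nonneg v)
    (by simpa using hv) (abs_nonneg μ) htriangle hradius
  obtain ⟨k, -⟩ := Function.ne_iff.1 hv
  have hrow : |(M *ᵥ v) k| = (M *ᵥ |v|) k := by simp [heig, habs, abs_mul]
  rcases nonneg_or_nonpos_of_abs_mulVec_eq hM hrow with hnonneg | hnonpos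
  · obtain ⟨hμ, hpos⟩ := pos_of_mulVec_eq_smul hM hnonneg hv heig
    exact ⟨hμ, .inl hpos⟩
  · obtain ⟨hμ, hneg⟩ := pos_of_mulVec_eq_smul hM (neg_nonneg.2 hnonpos) (neg_ne_zero.2 hv)
      (by rw [mulVec_neg, heig, smul_neg])
    exact ⟨hμ, .inr fun i => neg_pos.1 (hneg i)⟩

/-- Perron-type statement: if `M` is a positive matrix, `v ≠ 0` is a real
eigenvector for the eigenvalue `μ`, and `|μ|` is the spectral radius of `M`
(i.e. `|ν| ≤ |μ|` for every complex eigenvalue `ν` of `M`), then `μ > 0` and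
either `v` or `−v` has all coordinates positive. -/
theorem perron_eigenvector_pos {d : ℕ} (hd : 1 ≤ d)
    (M : Matrix (Fin d) (Fin d) ℝ) (hM : ∀ i j, 0 < M i j)
    (μ : ℝ) (v : Fin d → ℝ) (hv : v ≠ 0) (heig : M.mulVec v = μ • v)
    (hspec : ∀ ν : ℂ, (M.charpoly.map (algebraMap ℝ ℂ)).IsRoot ν →
      ‖ν‖ ≤ |μ|) :
    0 < μ ∧ ((∀ i, 0 < v i) ∨ (∀ i, v i < 0)) :=
  perron_eigenvector_pos_general M hM μ v hv heig hspec
end
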